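/- The Legendre transformation maps the minimal surface equation to the linear equation: if u(x,y) is a C² solution of (1 + u_y²)u_xx − 2u_x u_y u_xy + (1 + u_x²)u_yy = 0 on an open set where the Hessian of u is invertible, and φ is defined by φ(p,q) = x·u_x + y·u_y − u with p = u_x(x,y), q = u_y(x,y), then φ satisfies (1 + p²)φ_pp + 2pq·φ_pq + (1 + q²)φ_qq = 0 on the image of the gradient map. -/

import Mathlib

/-!
Write `g = ∇u`. Differentiating `φ ∘ g = x u_x + y u_y - u` gives `Dφ(g z) ∘ Dg z = z ⬝ Dg z`
(the terms coming from `Du` cancel), and `Dg z`, the Hessian of `u`, is invertible, so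
`∇φ ∘ ∇u = id` near every point of `s`. Differentiating once more, the Hessian of `φ` at `∇u z` is
the inverse of the Hessian of `u` at `z`: `(φ_pp, φ_pq, φ_qq) = (u_yy, -u_xy, u_xx) / det`,
which turns the minimal surface equation for `u` into the linear equation for `φ`. Invertibility
of `Dg` also makes `g '' s` open (inverse function theorem), so the `C²` hypothesis on `φ` there
controls its partial derivatives.
-/

noncomputable def pd₁ (f : ℝ → ℝ → ℝ) : ℝ → ℝ → ℝ := fun p q => deriv (fun x => f x q) p
noncomputable def pd₂ (f : ℝ → ℝ → ℝ) : ℝ → ℝ → ℝ := fun p q => deriv (fun y => f p y) q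

open Function Filter Topology

theorem ContinuousLinearMap.apply_eq_fst_smul_add_snd_smul {𝕜 F : Type*}
    [NontriviallyNormedField 𝕜] [NormedAddCommGroup F] [NormedSpace 𝕜 F] (L : 𝕜 × 𝕜 →L[𝕜] F)
    (v : 𝕜 × 𝕜) :
    L v = v.1 • L (1, 0) + v.2 • L (0, 1) := by
  rw [← map_smul, ← map_smul, ← map_add]
  simp

theorem surjective_of_det_ne_zero {a b c d : ℝ} (h : a * d - c * b ≠ 0) :
    Surjective fun w : ℝ × ℝ => (a * w.1 + b * w.2, c * w.1 + d * w.2) := by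
  intro v
  generalize hD : a * d - c * b = D at h
  refine ⟨((d * v.1 - b * v.2) / D, (a * v.2 - c * v.1) / D), ?_⟩
  ext <;> dsimp only <;> field_simp
  · linear_combination v.1 * hD
  · linear_combination v.2 * hD

theorem IsOpen.image_of_surjective_fderiv {E F : Type*} [NormedAddCommGroup E] [NormedSpace ℝ E]
    [CompleteSpace E] [NormedAddCommGroup F] [NormedSpace ℝ F] [CompleteSpace F]
    {g : E → F} {s : Set E} (hs : IsOpen s) (hg : ContDiffOn ℝ 1 g s)
    (hsurj : ∀ z ∈ s, Surjective (fderiv ℝ g z)) : IsOpen (g '' s) := by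
  rw [isOpen_iff_mem_nhds]
  rintro _ ⟨z, hz, rfl⟩
  have hstrict := (hg.contDiffAt (hs.mem_nhds hz)).hasStrictFDerivAt one_ne_zero
  rw [← hstrict.map_nhds_eq_of_surj (LinearMap.range_eq_top.mpr (hsurj z hz))]
  exact image_mem_map (hs.mem_nhds hz)

theorem fderiv_comp_fderiv_eq_id_of_leftInverse {𝕜 E F : Type*} [NontriviallyNormedField 𝕜]
    [NormedAddCommGroup E] [NormedSpace 𝕜 E] [NormedAddCommGroup F] [NormedSpace 𝕜 F]
    {f : F → E} {g : E → F} {z : E} (hf : DifferentiableAt 𝕜 f (g z))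
    (hg : DifferentiableAt 𝕜 g z) (hfg : f ∘ g =ᶠ[𝓝 z] id) :
    (fderiv 𝕜 f (g z)).comp (fderiv 𝕜 g z) = ContinuousLinearMap.id 𝕜 E :=
  (fderiv_comp z hf hg).symm.trans (hfg.fderiv_eq.trans fderiv_id)

section PartialDerivatives

variable {f : ℝ → ℝ → ℝ} {z : ℝ × ℝ}

theorem pd₁_eq_fderiv (h : DifferentiableAt ℝ (uncurry f) z) :
    pd₁ f z.1 z.2 = fderiv ℝ (uncurry f) z (1, 0) := by
  have hline : HasDerivAt (fun x : ℝ => (x, z.2)) (1, 0) z.1 :=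
    (hasDerivAt_id z.1).prodMk (hasDerivAt_const z.1 z.2)
  exact (h.hasFDerivAt.comp_hasDerivAt z.1 hline).deriv

theorem pd₂_eq_fderiv (h : DifferentiableAt ℝ (uncurry f) z) :
    pd₂ f z.1 z.2 = fderiv ℝ (uncurry f) z (0, 1) := by
  have hline : HasDerivAt (fun y : ℝ => (z.1, y)) (0, 1) z.2 :=
    (hasDerivAt_const z.2 z.1).prodMk (hasDerivAt_id z.2)
  exact (h.hasFDerivAt.comp_hasDerivAt z.2 hline).deriv

theorem fderiv_uncurry_apply (h : DifferentiableAt ℝ (uncurry f) z) (v : ℝ × ℝ) :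
    fderiv ℝ (uncurry f) z v = v.1 * pd₁ f z.1 z.2 + v.2 * pd₂ f z.1 z.2 := by
  rw [pd₁_eq_fderiv h, pd₂_eq_fderiv h]
  exact (fderiv ℝ (uncurry f) z).apply_eq_fst_smul_add_snd_smul v

variable {s : Set (ℝ × ℝ)} {m n : WithTop ℕ∞}

theorem ContDiffOn.uncurry_pd₁ (hf : ContDiffOn ℝ n (uncurry f) s) (hs : IsOpen s)
    (hmn : m + 1 ≤ n) : ContDiffOn ℝ m (uncurry (pd₁ f)) s :=
  ((hf.fderiv_of_isOpen hs hmn).clm_apply contDiffOn_const).congr fun _ hz =>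
    pd₁_eq_fderiv ((hf.differentiableOn (by rintro rfl; simp at hmn)).differentiableAt
      (hs.mem_nhds hz))

theorem ContDiffOn.uncurry_pd₂ (hf : ContDiffOn ℝ n (uncurry f) s) (hs : IsOpen s)
    (hmn : m + 1 ≤ n) : ContDiffOn ℝ m (uncurry (pd₂ f)) s :=
  ((hf.fderiv_of_isOpen hs hmn).clm_apply contDiffOn_const).congr fun _ hz =>
    pd₂_eq_fderiv ((hf.differentiableOn (by rintro rfl; simp at hmn)).differentiableAt
      (hs.mem_nhds hz))

end PartialDerivatives

noncomputable def partialGrad (f : ℝ → ℝ → ℝ) (z : ℝ × ℝ) : ℝ × ℝ :=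
  (pd₁ f z.1 z.2, pd₂ f z.1 z.2)

section PartialGrad

variable {f : ℝ → ℝ → ℝ} {s : Set (ℝ × ℝ)}

theorem ContDiffOn.partialGrad (hf : ContDiffOn ℝ 2 (uncurry f) s) (hs : IsOpen s) :
    ContDiffOn ℝ 1 (partialGrad f) s :=
  (hf.uncurry_pd₁ hs le_rfl).prodMk (hf.uncurry_pd₂ hs le_rfl)

theorem fderiv_partialGrad_apply (hf : ContDiffOn ℝ 2 (uncurry f) s) (hs : IsOpen s)
    {z : ℝ × ℝ} (hz : z ∈ s) (v : ℝ × ℝ) :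
    fderiv ℝ (partialGrad f) z v =
      (v.1 * pd₁ (pd₁ f) z.1 z.2 + v.2 * pd₂ (pd₁ f) z.1 z.2,
        v.1 * pd₁ (pd₂ f) z.1 z.2 + v.2 * pd₂ (pd₂ f) z.1 z.2) := by
  have h₁ := ((hf.uncurry_pd₁ hs le_rfl).differentiableOn one_ne_zero).differentiableAt
    (hs.mem_nhds hz)
  have h₂ := ((hf.uncurry_pd₂ hs le_rfl).differentiableOn one_ne_zero).differentiableAt
    (hs.mem_nhds hz)
  rw [show partialGrad f = fun z => (uncurry (pd₁ f) z, uncurry (pd₂ f) z) from rfl,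
    h₁.fderiv_prodMk h₂]
  exact Prod.ext (fderiv_uncurry_apply h₁ v) (fderiv_uncurry_apply h₂ v)

theorem surjective_fderiv_partialGrad (hf : ContDiffOn ℝ 2 (uncurry f) s) (hs : IsOpen s)
    {z : ℝ × ℝ} (hz : z ∈ s)
    (hdet : pd₁ (pd₁ f) z.1 z.2 * pd₂ (pd₂ f) z.1 z.2
      - pd₁ (pd₂ f) z.1 z.2 * pd₂ (pd₁ f) z.1 z.2 ≠ 0) :
    Surjective (fderiv ℝ (partialGrad f) z) := by
  rw [show ⇑(fderiv ℝ (partialGrad f) z) = _ from funext (fderiv_partialGrad_apply hf hs hz)]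
  simpa only [mul_comm] using surjective_of_det_ne_zero hdet

end PartialGrad

theorem partialGrad_partialGrad_eq_of_legendre {u φ : ℝ → ℝ → ℝ} {z : ℝ × ℝ}
    (hu : DifferentiableAt ℝ (uncurry u) z) (hg : DifferentiableAt ℝ (partialGrad u) z)
    (hsurj : Surjective (fderiv ℝ (partialGrad u) z))
    (hφ : DifferentiableAt ℝ (uncurry φ) (partialGrad u z))
    (hdef : ∀ᶠ z' in 𝓝 z, φ (pd₁ u z'.1 z'.2) (pd₂ u z'.1 z'.2)
        = z'.1 * pd₁ u z'.1 z'.2 + z'.2 * pd₂ u z'.1 z'.2 - u z'.1 z'.2) :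
    partialGrad φ (partialGrad u z) = z := by
  set g := partialGrad u
  set L := fderiv ℝ g z
  set ℓ := fderiv ℝ (uncurry φ) (g z)
  have hrhs := ((hasFDerivAt_fst.mul hg.hasFDerivAt.fst).add
    (hasFDerivAt_snd.mul hg.hasFDerivAt.snd)).sub hu.hasFDerivAt
  have hchain : ℓ.comp L = _ :=
    (hφ.hasFDerivAt.comp z hg.hasFDerivAt).unique (hrhs.congr_of_eventuallyEq hdef)
  have hℓ : ∀ v, ℓ (L v) = z.1 * (L v).1 + z.2 * (L v).2 := by
    intro v
    have := congrArg (· v) hchain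
    simp only [ContinuousLinearMap.comp_apply, sub_apply,
      add_apply, smul_apply, ContinuousLinearMap.coe_fst',
      ContinuousLinearMap.coe_snd', smul_eq_mul, fderiv_uncurry_apply hu] at this
    rw [this]
    simp only [g, partialGrad]
    ring
  obtain ⟨v₁, hv₁⟩ := hsurj (1, 0)
  obtain ⟨v₂, hv₂⟩ := hsurj (0, 1)
  ext
  · rw [partialGrad, pd₁_eq_fderiv hφ, ← hv₁, hℓ, hv₁]
    simp
  · rw [partialGrad, pd₂_eq_fderiv hφ, ← hv₂, hℓ, hv₂]
    simp

theorem eqOn_partialGrad_comp_partialGrad {u φ : ℝ → ℝ → ℝ} {s : Set (ℝ × ℝ)}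
    (hu : ContDiffOn ℝ 2 (uncurry u) s) (hs : IsOpen s)
    (hsurj : ∀ z ∈ s, Surjective (fderiv ℝ (partialGrad u) z))
    (hφ : DifferentiableOn ℝ (uncurry φ) (partialGrad u '' s)) (hopen : IsOpen (partialGrad u '' s))
    (hdef : ∀ z ∈ s, φ (pd₁ u z.1 z.2) (pd₂ u z.1 z.2)
        = z.1 * pd₁ u z.1 z.2 + z.2 * pd₂ u z.1 z.2 - u z.1 z.2) :
    Set.EqOn (partialGrad φ ∘ partialGrad u) id s := fun z hz =>
  partialGrad_partialGrad_eq_of_legendre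
    ((hu.differentiableOn two_ne_zero).differentiableAt (hs.mem_nhds hz))
    (((hu.partialGrad hs).differentiableOn one_ne_zero).differentiableAt (hs.mem_nhds hz))
    (hsurj z hz) (hφ.differentiableAt (hopen.mem_nhds (Set.mem_image_of_mem _ hz)))
    (eventually_of_mem (hs.mem_nhds hz) hdef)

theorem linear_eq_of_inverse_of_minimal_surface_eq {a b c d α β γ δ p q : ℝ}
    (hdet : a * d - c * b ≠ 0)
    (h₁ : a * α + c * β = 1) (h₂ : a * γ + c * δ = 0)
    (h₃ : b * α + d * β = 0) (h₄ : b * γ + d * δ = 1)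
    (hmin : (1 + q ^ 2) * a - 2 * p * q * c + (1 + p ^ 2) * d = 0) :
    (1 + p ^ 2) * α + 2 * p * q * γ + (1 + q ^ 2) * δ = 0 := by
  -- Cramer's rule: `det • (α, γ, δ) = (d, -c, a)`.
  refine (mul_eq_zero.mp ?_).resolve_left hdet
  linear_combination (1 + p ^ 2) * (d * h₁ - c * h₃) + 2 * p * q * (d * h₂ - c * h₄)
    + (1 + q ^ 2) * (a * h₄ - b * h₂) + hmin

theorem legendre_transform_linearizes_general
    (s : Set (ℝ × ℝ)) (hs : IsOpen s)
    (u : ℝ → ℝ → ℝ) (hu : ContDiffOn ℝ 2 (fun z : ℝ × ℝ => u z.1 z.2) s)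
    (hPDE : ∀ z ∈ s,
      (1 + pd₂ u z.1 z.2 ^ 2) * pd₁ (pd₁ u) z.1 z.2
        - 2 * pd₁ u z.1 z.2 * pd₂ u z.1 z.2 * pd₁ (pd₂ u) z.1 z.2
        + (1 + pd₁ u z.1 z.2 ^ 2) * pd₂ (pd₂ u) z.1 z.2 = 0)
    (hHess : ∀ z ∈ s,
      pd₁ (pd₁ u) z.1 z.2 * pd₂ (pd₂ u) z.1 z.2
        - pd₁ (pd₂ u) z.1 z.2 * pd₂ (pd₁ u) z.1 z.2 ≠ 0)
    (g : ℝ × ℝ → ℝ × ℝ) (hg : g = fun z => (pd₁ u z.1 z.2, pd₂ u z.1 z.2))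
    (φ : ℝ → ℝ → ℝ) (hφ : ContDiffOn ℝ 2 (fun w : ℝ × ℝ => φ w.1 w.2) (g '' s))
    (hdef : ∀ z ∈ s,
      φ (pd₁ u z.1 z.2) (pd₂ u z.1 z.2)
        = z.1 * pd₁ u z.1 z.2 + z.2 * pd₂ u z.1 z.2 - u z.1 z.2) :
    ∀ w ∈ g '' s,
      (1 + w.1 ^ 2) * pd₁ (pd₁ φ) w.1 w.2
        + 2 * w.1 * w.2 * pd₁ (pd₂ φ) w.1 w.2
        + (1 + w.2 ^ 2) * pd₂ (pd₂ φ) w.1 w.2 = 0 := by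
  obtain rfl : g = partialGrad u := hg
  have hsurj z (hz : z ∈ s) := surjective_fderiv_partialGrad hu hs hz (hHess z hz)
  have hopen : IsOpen (partialGrad u '' s) :=
    hs.image_of_surjective_fderiv (hu.partialGrad hs) hsurj
  have hdual := eqOn_partialGrad_comp_partialGrad hu hs hsurj
    (hφ.differentiableOn two_ne_zero) hopen hdef
  rintro _ ⟨z, hz, rfl⟩
  have hw : partialGrad u z ∈ partialGrad u '' s := Set.mem_image_of_mem _ hz
  have hinv := fderiv_comp_fderiv_eq_id_of_leftInverse
    (((hφ.partialGrad hopen).differentiableOn one_ne_zero).differentiableAt (hopen.mem_nhds hw))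
    (((hu.partialGrad hs).differentiableOn one_ne_zero).differentiableAt (hs.mem_nhds hz))
    (hdual.eventuallyEq_of_mem (hs.mem_nhds hz))
  have h₁₀ := congrArg (· (1, 0)) hinv
  have h₀₁ := congrArg (· (0, 1)) hinv
  simp only [ContinuousLinearMap.comp_apply, fderiv_partialGrad_apply hu hs hz,
    fderiv_partialGrad_apply hφ hopen hw, ContinuousLinearMap.id_apply, one_mul, zero_mul,
    add_zero, zero_add, Prod.mk.injEq] at h₁₀ h₀₁
  exact linear_eq_of_inverse_of_minimal_surface_eq (hHess z hz) h₁₀.1 h₁₀.2 h₀₁.1 h₀₁.2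
    (hPDE z hz)

theorem legendre_transform_linearizes
    (s : Set (ℝ × ℝ)) (hs : IsOpen s)
    (u : ℝ → ℝ → ℝ) (hu : ContDiffOn ℝ 2 (fun z : ℝ × ℝ => u z.1 z.2) s)
    (hPDE : ∀ z ∈ s,
      (1 + pd₂ u z.1 z.2 ^ 2) * pd₁ (pd₁ u) z.1 z.2
        - 2 * pd₁ u z.1 z.2 * pd₂ u z.1 z.2 * pd₁ (pd₂ u) z.1 z.2
        + (1 + pd₁ u z.1 z.2 ^ 2) * pd₂ (pd₂ u) z.1 z.2 = 0)
    (hHess : ∀ z ∈ s,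
      pd₁ (pd₁ u) z.1 z.2 * pd₂ (pd₂ u) z.1 z.2
        - pd₁ (pd₂ u) z.1 z.2 * pd₂ (pd₁ u) z.1 z.2 ≠ 0)
    (g : ℝ × ℝ → ℝ × ℝ) (hg : g = fun z => (pd₁ u z.1 z.2, pd₂ u z.1 z.2))
    (hgdiff : Set.InjOn g s)
    (φ : ℝ → ℝ → ℝ) (hφ : ContDiffOn ℝ 2 (fun w : ℝ × ℝ => φ w.1 w.2) (g '' s))
    (hdef : ∀ z ∈ s,
      φ (pd₁ u z.1 z.2) (pd₂ u z.1 z.2)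
        = z.1 * pd₁ u z.1 z.2 + z.2 * pd₂ u z.1 z.2 - u z.1 z.2) :
    ∀ w ∈ g '' s,
      (1 + w.1 ^ 2) * pd₁ (pd₁ φ) w.1 w.2
        + 2 * w.1 * w.2 * pd₁ (pd₂ φ) w.1 w.2
        + (1 + w.2 ^ 2) * pd₂ (pd₂ φ) w.1 w.2 = 0 :=
  legendre_transform_linearizes_general s hs u hu hPDE hHess g hg φ hφ hdef
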